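/- Let k ∈ ℝ³ be nonzero and let t be a trace-free real symmetric 3×3 matrix such that k × (t k) = 0 (vanishing of the symbol of rot₁ div₂ applied to t). Then there exists a trace-free real symmetric 3×3 matrix χ with σ_k(Q)(χ) = t. Conversely, for every trace-free symmetric χ, the matrix σ_k(Q)(χ) is trace-free symmetric and satisfies k × (σ_k(Q)(χ) k) = 0. (Exactness of the symbol sequence of the momentum complex at the slot S₀² → rot₁ div₂.) -/

import Mathlib

open scoped BigOperators

/-- The Levi-Civita symbol `ε_{ijk}` on three indices. -/
def eps : Fin 3 → Fin 3 → Fin 3 → ℝ := fun i j k =>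
  if (i, j, k) = ((0 : Fin 3), (1 : Fin 3), (2 : Fin 3)) ∨
     (i, j, k) = ((1 : Fin 3), (2 : Fin 3), (0 : Fin 3)) ∨
     (i, j, k) = ((2 : Fin 3), (0 : Fin 3), (1 : Fin 3)) then 1
  else if (i, j, k) = ((2 : Fin 3), (1 : Fin 3), (0 : Fin 3)) ∨
     (i, j, k) = ((1 : Fin 3), (0 : Fin 3), (2 : Fin 3)) ∨
     (i, j, k) = ((0 : Fin 3), (2 : Fin 3), (1 : Fin 3)) then -1
  else 0

/-- The Kronecker delta `δ_{ij}`. -/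
def kdelta (i j : Fin 3) : ℝ := if i = j then 1 else 0

/-- The cross product on `ℝ³`: `(a × b)_i = Σ_{j,l} ε_{ijl} a_j b_l`. -/
def cross (a b : Fin 3 → ℝ) : Fin 3 → ℝ := fun i => ∑ j, ∑ l, eps i j l * a j * b l

/-- The symbol of `rot₂`:
`(σ_k(rot₂)(h))_{ij} = Σ_{ℓ,m} ( ε_{iℓm} k_ℓ h_{mj} + ε_{jℓm} k_ℓ h_{mi} )`. -/
def sigRot2 (k : Fin 3 → ℝ) (h : Fin 3 → Fin 3 → ℝ) : Fin 3 → Fin 3 → ℝ :=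
  fun i j => ∑ l, ∑ m, (eps i l m * k l * h m j + eps j l m * k l * h m i)

/-- The symbol of `Q`:
`(σ_k(Q)(h))_{ij} = 2( 2 Σ_ℓ k_ℓ ( k_i h_{jℓ} + k_j h_{iℓ} )
  − (4/3) (Σ_{ℓ,m} k_ℓ k_m h_{ℓm}) δ_{ij} − 2 |k|² h_{ij}
  + ( |k|² δ_{ij} − k_i k_j ) (tr h) )`. -/
noncomputable def sigQ (k : Fin 3 → ℝ) (h : Fin 3 → Fin 3 → ℝ) : Fin 3 → Fin 3 → ℝ :=
  fun i j => 2 * (2 * (∑ l, k l * (k i * h j l + k j * h i l))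
    - (4/3) * (∑ l, ∑ m, k l * k m * h l m) * kdelta i j
    - 2 * (∑ l, k l ^ 2) * h i j
    + ((∑ l, k l ^ 2) * kdelta i j - k i * k j) * (∑ l, h l l))

/-! For every `h`, `σ_k(Q)(h) k = (4/3)(k·hk) k` and `tr σ_k(Q)(h) = 0`, which gives the converse.
For the direct statement, `k × tk = 0` with `k ≠ 0` makes `k` an eigenvector, `tk = c k`. On
trace-free `h` with `hk = μ k` the symbol reduces to
`σ_k(Q)(h) = 8μ k ⊗ k − (8/3) μ |k|² I − 4 |k|² h`, so it suffices to take
`χ = −t / (4|k|²) + (3c / (2|k|⁴)) k ⊗ k − (c / (2|k|²)) I`, which is trace-free, symmetric and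
has `χ k = (3c / (4|k|²)) k`. -/

open Matrix

lemma exists_smul_eq_of_crossProduct_eq_zero {F : Type*} [Field F] {u v : Fin 3 → F}
    (hu : u ≠ 0) (h : u ⨯₃ v = 0) : ∃ c : F, c • u = v := by
  by_contra! hne
  exact crossProduct_ne_zero_iff_linearIndependent.mpr ((LinearIndependent.pair_iff' hu).mpr hne) h

lemma cross_eq_crossProduct (a b : Fin 3 → ℝ) : cross a b = a ⨯₃ b := by
  ext i
  fin_cases i <;> simp [cross, eps, cross_apply, Fin.sum_univ_three] <;> ring

lemma sigQ_eq (k : Fin 3 → ℝ) (h : Matrix (Fin 3) (Fin 3) ℝ) :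
    sigQ k h = ((2 : ℝ) • ((2 : ℝ) • (vecMulVec k (h *ᵥ k) + vecMulVec (h *ᵥ k) k)
      - (4 / 3 * (k ⬝ᵥ h *ᵥ k)) • 1 - (2 * (k ⬝ᵥ k)) • h
      + trace h • ((k ⬝ᵥ k) • 1 - vecMulVec k k)) : Matrix (Fin 3) (Fin 3) ℝ) := by
  ext i j
  simp only [sigQ, kdelta, one_apply, vecMulVec_apply, mulVec, dotProduct, trace, diag_apply,
    Fin.sum_univ_three, Matrix.smul_apply, Matrix.add_apply, Matrix.sub_apply, smul_eq_mul]
  ring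

lemma sigQ_isSymm (k : Fin 3 → ℝ) {h : Matrix (Fin 3) (Fin 3) ℝ} (hh : h.IsSymm) :
    IsSymm (sigQ k h) := by
  unfold IsSymm
  rw [sigQ_eq]
  simp only [transpose_smul, transpose_add, transpose_sub, transpose_one, transpose_vecMulVec,
    hh.eq]
  rw [add_comm (vecMulVec (h *ᵥ k) k)]

lemma trace_sigQ (k : Fin 3 → ℝ) (h : Matrix (Fin 3) (Fin 3) ℝ) : trace (sigQ k h) = 0 := by
  rw [sigQ_eq]
  simp only [trace_add, trace_sub, trace_smul, trace_vecMulVec, trace_one, Fintype.card_fin,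
    dotProduct_comm (h *ᵥ k), smul_eq_mul]
  ring

lemma sigQ_mulVec_self (k : Fin 3 → ℝ) (h : Matrix (Fin 3) (Fin 3) ℝ) :
    sigQ k h *ᵥ k = (4 / 3 * (k ⬝ᵥ h *ᵥ k)) • k := by
  rw [sigQ_eq]
  simp only [add_mulVec, sub_mulVec, smul_mulVec, vecMulVec_mulVec, one_mulVec, op_smul_eq_smul,
    dotProduct_comm (h *ᵥ k)]
  module

lemma cross_sigQ_mulVec_self (k : Fin 3 → ℝ) (h : Matrix (Fin 3) (Fin 3) ℝ) :
    cross k (sigQ k h *ᵥ k) = 0 := by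
  rw [sigQ_mulVec_self, cross_eq_crossProduct, map_smul, cross_self, smul_zero]

lemma sigQ_of_trace_eq_zero_of_mulVec_eq_smul {k : Fin 3 → ℝ} {h : Matrix (Fin 3) (Fin 3) ℝ} {μ : ℝ}
    (htr : trace h = 0) (hhk : h *ᵥ k = μ • k) :
    sigQ k h = ((8 * μ) • vecMulVec k k - (8 / 3 * μ * (k ⬝ᵥ k)) • 1 - (4 * (k ⬝ᵥ k)) • h :
      Matrix (Fin 3) (Fin 3) ℝ) := by
  rw [sigQ_eq, htr, hhk]
  ext i j
  simp only [vecMulVec_smul, smul_vecMulVec, dotProduct_smul, smul_eq_mul, zero_smul, add_zero,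
    Matrix.smul_apply, Matrix.sub_apply, Matrix.add_apply]
  ring

lemma exists_sigQ_eq_of_mulVec_eq_smul {k : Fin 3 → ℝ} {t : Matrix (Fin 3) (Fin 3) ℝ} {c : ℝ} (hk : k ≠ 0)
    (ht : t.IsSymm) (htr : trace t = 0) (htk : t *ᵥ k = c • k) :
    ∃ χ : Matrix (Fin 3) (Fin 3) ℝ, χ.IsSymm ∧ trace χ = 0 ∧ sigQ k χ = t := by
  have hK : k ⬝ᵥ k ≠ 0 := by simpa [dotProduct_self_eq_zero] using hk
  set χ := (-(4 * (k ⬝ᵥ k))⁻¹) • t + (3 * c / (2 * (k ⬝ᵥ k) ^ 2)) • vecMulVec k k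
    - (c / (2 * (k ⬝ᵥ k))) • 1
  have hχtr : trace χ = 0 := by
    simp only [χ, trace_add, trace_sub, trace_smul, trace_vecMulVec, trace_one, Fintype.card_fin,
      htr, smul_eq_mul]
    field_simp
    ring
  have hχk : χ *ᵥ k = (3 * c / (4 * (k ⬝ᵥ k))) • k := by
    simp only [χ, add_mulVec, sub_mulVec, smul_mulVec, vecMulVec_mulVec, op_smul_eq_smul,
      one_mulVec, htk]
    ext i
    simp only [Pi.sub_apply, Pi.add_apply, Pi.smul_apply, smul_eq_mul]
    field_simp
    ring
  refine ⟨χ, by simp [χ, IsSymm, ht.eq], hχtr, ?_⟩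
  rw [sigQ_of_trace_eq_zero_of_mulVec_eq_smul hχtr hχk]
  ext i j
  simp only [χ, Matrix.sub_apply, Matrix.add_apply, Matrix.smul_apply, vecMulVec_apply,
    smul_eq_mul]
  field_simp
  ring

/-- exactness of the symbol sequence of the momentum complex at the slot
`S₀² → rot₁ div₂`: for `k ≠ 0`, every trace-free symmetric `t` with `k × (t k) = 0`
is `σ_k(Q)(χ)` for some trace-free symmetric `χ`; conversely every `σ_k(Q)(χ)` is
trace-free symmetric with `k × (σ_k(Q)(χ) k) = 0`. -/
theorem stmt14 (k : Fin 3 → ℝ) (hk : k ≠ 0) :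
    (∀ t : Fin 3 → Fin 3 → ℝ, (∀ i j, t i j = t j i) → (∑ i, t i i) = 0 →
      (∀ i, cross k (fun a => ∑ j, t a j * k j) i = 0) →
      ∃ χ : Fin 3 → Fin 3 → ℝ, (∀ i j, χ i j = χ j i) ∧ (∑ i, χ i i) = 0 ∧
        ∀ i j, sigQ k χ i j = t i j) ∧
    (∀ χ : Fin 3 → Fin 3 → ℝ, (∀ i j, χ i j = χ j i) → (∑ i, χ i i) = 0 →
      (∀ i j, sigQ k χ i j = sigQ k χ j i) ∧ (∑ i, sigQ k χ i i) = 0 ∧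
        (∀ i, cross k (fun a => ∑ j, sigQ k χ a j * k j) i = 0)) := by
  refine ⟨fun t ht htr hcross => ?_, fun χ hχ _ => ⟨fun i j => ?_, trace_sigQ k χ,
    congrFun (cross_sigQ_mulVec_self k χ)⟩⟩
  · obtain ⟨c, hc⟩ : ∃ c : ℝ, c • k = t *ᵥ k :=
      exists_smul_eq_of_crossProduct_eq_zero hk (cross_eq_crossProduct k _ ▸ funext hcross)
    have ht : IsSymm t := IsSymm.ext fun i j => ht j i
    obtain ⟨χ, hχs, hχtr, hχ⟩ := exists_sigQ_eq_of_mulVec_eq_smul hk ht htr hc.symm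
    exact ⟨χ, fun i j => hχs.apply j i, hχtr, fun i j => congrFun₂ hχ i j⟩
  · have hχ : IsSymm χ := IsSymm.ext fun i j => hχ j i
    exact (sigQ_isSymm k hχ).apply j i
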